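/- arXiv:2602.07619 — 11 statements merged into one kernel-verified Lean document; each statement's English description precedes it below -/
import Mathlib

section
/- Let ⊘ be a uniform Kronecker quotient over a field F, meaning ⊘ is a Kronecker quotient that is linear in its first argument and satisfies (A⊗C)⊘B = A⊗(C⊘B) for all compatible matrices. Then the induced Kronecker difference M ⊖ B := (M − I_m⊗B) ⊘ I_n is uniform: it satisfies (A⊕C)⊖B = A⊕(C⊖B) for all A ∈ F^{m×m}, B ∈ F^{n×n}, C ∈ F^{pn×pn}, and is additive and homogeneous in the sense that (A+B)⊖(C+D) = (A⊖C)+(B⊖D) and (kA)⊖(kC) = k(A⊖C). -/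
open Matrix Kronecker

/-- The Kronecker sum `A ⊕ B = A ⊗ I + I ⊗ B`. -/
def ksum {F : Type*} [Semiring F] {α β : Type*} [Fintype α] [Fintype β]
    [DecidableEq α] [DecidableEq β]
    (A : Matrix α α F) (B : Matrix β β F) : Matrix (α × β) (α × β) F :=
  A ⊗ₖ (1 : Matrix β β F) + (1 : Matrix α α F) ⊗ₖ B

theorem stmt1 {F : Type*} [Field F]
    (Q : ∀ (k l : Type) [Fintype k] [DecidableEq k] [Fintype l] [DecidableEq l],
      Matrix (k × l) (k × l) F → Matrix l l F → Matrix k k F)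
    (hquot : ∀ (k l : Type) [Fintype k] [DecidableEq k] [Fintype l] [DecidableEq l]
      (A : Matrix k k F) (B : Matrix l l F), B ≠ 0 → Q k l (A ⊗ₖ B) B = A)
    (hadd : ∀ (k l : Type) [Fintype k] [DecidableEq k] [Fintype l] [DecidableEq l]
      (A B : Matrix (k × l) (k × l) F) (C : Matrix l l F),
      Q k l (A + B) C = Q k l A C + Q k l B C)
    (hsmul : ∀ (k l : Type) [Fintype k] [DecidableEq k] [Fintype l] [DecidableEq l]
      (c : F) (A : Matrix (k × l) (k × l) F) (C : Matrix l l F),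
      Q k l (c • A) C = c • Q k l A C)
    (hunif : ∀ (k p l : Type) [Fintype k] [DecidableEq k] [Fintype p] [DecidableEq p]
      [Fintype l] [DecidableEq l]
      (A : Matrix k k F) (B : Matrix l l F) (C : Matrix (p × l) (p × l) F),
      Q (k × p) l (Matrix.reindex (Equiv.prodAssoc k p l).symm
        (Equiv.prodAssoc k p l).symm (A ⊗ₖ C)) B = A ⊗ₖ Q p l C B) :
    (∀ (k p l : Type) [Fintype k] [DecidableEq k] [Fintype p] [DecidableEq p]
      [Fintype l] [DecidableEq l] [Nonempty l]
      (A : Matrix k k F) (B : Matrix l l F) (C : Matrix (p × l) (p × l) F),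
      Q (k × p) l (Matrix.reindex (Equiv.prodAssoc k p l).symm
          (Equiv.prodAssoc k p l).symm (ksum A C) -
          (1 : Matrix (k × p) (k × p) F) ⊗ₖ B) (1 : Matrix l l F)
        = ksum A (Q p l (C - (1 : Matrix p p F) ⊗ₖ B) (1 : Matrix l l F))) ∧
    (∀ (k l : Type) [Fintype k] [DecidableEq k] [Fintype l] [DecidableEq l]
      (A B : Matrix (k × l) (k × l) F) (C D : Matrix l l F),
      Q k l ((A + B) - (1 : Matrix k k F) ⊗ₖ (C + D)) (1 : Matrix l l F)
        = Q k l (A - (1 : Matrix k k F) ⊗ₖ C) (1 : Matrix l l F)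
          + Q k l (B - (1 : Matrix k k F) ⊗ₖ D) (1 : Matrix l l F)) ∧
    (∀ (k l : Type) [Fintype k] [DecidableEq k] [Fintype l] [DecidableEq l]
      (c : F) (A : Matrix (k × l) (k × l) F) (C : Matrix l l F),
      Q k l (c • A - (1 : Matrix k k F) ⊗ₖ (c • C)) (1 : Matrix l l F)
        = c • Q k l (A - (1 : Matrix k k F) ⊗ₖ C) (1 : Matrix l l F)) := by
  refine ⟨?_, ?_, ?_⟩
  · intro k p l _ _ _ _ _ _ _ A B C
    have hassoc : ∀ (X : Matrix k k F) (Y : Matrix (p × l) (p × l) F)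
        (U : Matrix p p F) (V : Matrix l l F),
        (X ⊗ₖ U) ⊗ₖ V = Matrix.reindex (Equiv.prodAssoc k p l).symm
          (Equiv.prodAssoc k p l).symm (X ⊗ₖ (U ⊗ₖ V)) := by
      intro X Y U V
      have h := Matrix.kronecker_assoc' X U V
      rw [Matrix.reindex_apply, ← h, Matrix.submatrix_submatrix]
      simp
    have h1 : (1 : Matrix (k × p) (k × p) F) ⊗ₖ B
        = Matrix.reindex (Equiv.prodAssoc k p l).symm
          (Equiv.prodAssoc k p l).symm ((1 : Matrix k k F) ⊗ₖ ((1 : Matrix p p F) ⊗ₖ B)) := by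
      rw [← hassoc 1 C 1 B, Matrix.one_kronecker_one]
    have key : Matrix.reindex (Equiv.prodAssoc k p l).symm
          (Equiv.prodAssoc k p l).symm (ksum A C) -
          (1 : Matrix (k × p) (k × p) F) ⊗ₖ B
        = Matrix.reindex (Equiv.prodAssoc k p l).symm
          (Equiv.prodAssoc k p l).symm (A ⊗ₖ (1 : Matrix (p × l) (p × l) F))
        + Matrix.reindex (Equiv.prodAssoc k p l).symm (Equiv.prodAssoc k p l).symm
            ((1 : Matrix k k F) ⊗ₖ (C - (1 : Matrix p p F) ⊗ₖ B)) := by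
      have ksub : ∀ (X : Matrix k k F) (Y Z : Matrix (p × l) (p × l) F),
          X ⊗ₖ (Y - Z) = X ⊗ₖ Y - X ⊗ₖ Z := by
        intro X Y Z
        ext ⟨i, j⟩ ⟨i', j'⟩
        simp [Matrix.kroneckerMap_apply, mul_sub]
      have radd : ∀ (X Y : Matrix (k × (p × l)) (k × (p × l)) F),
          Matrix.reindex (Equiv.prodAssoc k p l).symm (Equiv.prodAssoc k p l).symm (X + Y)
          = Matrix.reindex (Equiv.prodAssoc k p l).symm (Equiv.prodAssoc k p l).symm X
            + Matrix.reindex (Equiv.prodAssoc k p l).symm (Equiv.prodAssoc k p l).symm Y := by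
        intro X Y; ext i j; simp [Matrix.reindex_apply, Matrix.submatrix_apply]
      have rsub : ∀ (X Y : Matrix (k × (p × l)) (k × (p × l)) F),
          Matrix.reindex (Equiv.prodAssoc k p l).symm (Equiv.prodAssoc k p l).symm (X - Y)
          = Matrix.reindex (Equiv.prodAssoc k p l).symm (Equiv.prodAssoc k p l).symm X
            - Matrix.reindex (Equiv.prodAssoc k p l).symm (Equiv.prodAssoc k p l).symm Y := by
        intro X Y; ext i j; simp [Matrix.reindex_apply, Matrix.submatrix_apply]
      rw [h1, ksum, ksub, radd, rsub]
      abel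
    rw [key, hadd, hunif, hunif, ksum]
    congr 1
    have hone : (1 : Matrix l l F) ≠ 0 := by
      intro h
      have := Matrix.one_apply_eq (α := F) (Classical.arbitrary l)
      rw [h] at this
      simp at this
    rw [← Matrix.one_kronecker_one (α := F) (m := p) (n := l), hquot p l 1 1 hone]
  · intro k l _ _ _ _ A B C D
    have h : (A + B) - (1 : Matrix k k F) ⊗ₖ (C + D)
        = (A - (1 : Matrix k k F) ⊗ₖ C) + (B - (1 : Matrix k k F) ⊗ₖ D) := by
      rw [Matrix.kronecker_add]; abel
    rw [h, hadd]
  · intro k l _ _ _ _ c A C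
    have h : c • A - (1 : Matrix k k F) ⊗ₖ (c • C)
        = c • (A - (1 : Matrix k k F) ⊗ₖ C) := by
      rw [Matrix.kronecker_smul, smul_sub]
    rw [h, hsmul]
end

section
/- For every field F there exists a uniform Kronecker quotient over F. Explicitly, for each nonzero C ∈ F^{n×n} pick an index f(C) = (i,j) with C_{i,j} ≠ 0, and define the linear map X ↦ X⊘C by (A⊗B)⊘C := A · (B_{f(C)} / C_{f(C)}) on decomposable elements and linear extension; this is a well-defined uniform Kronecker quotient. -/
/-!
Divide by a single nonzero entry of the divisor: if `C i j ≠ 0`, the `(i, j)` block of `A ⊗ₖ B`,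
i.e. the `k × k` matrix `(a, b) ↦ (A ⊗ₖ B) (a, i) (b, j) = A a b * B i j`, equals `B i j • A`, so
`X ⊘ C := (C i j)⁻¹ • (block (i, j) of X)` is linear in `X`, returns `A` on `A ⊗ₖ C`, and commutes
with `A ⊗ₖ -` because taking a block only looks at the innermost index.
-/

open Matrix Kronecker

namespace Matrix

variable {R : Type*} {k p l : Type*}

theorem kronecker_submatrix_prodMk [CommMagma R] (A : Matrix k k R) (B : Matrix l l R) (i j : l) :
    (A ⊗ₖ B).submatrix (·, i) (·, j) = B i j • A := by
  ext a b
  exact mul_comm _ _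

theorem reindex_prodAssoc_kronecker_submatrix_prodMk [Mul R] (A : Matrix k k R)
    (C : Matrix (p × l) (p × l) R) (i j : l) :
    (reindex (Equiv.prodAssoc k p l).symm (Equiv.prodAssoc k p l).symm (A ⊗ₖ C)).submatrix
      (·, i) (·, j) = A ⊗ₖ C.submatrix (·, i) (·, j) :=
  rfl

@[simps]
def submatrixProdMkRight (S : Type*) [Semiring S] [AddCommMonoid R] [Module S R] (i j : l) :
    Matrix (k × l) (k × l) R →ₗ[S] Matrix k k R where
  toFun X := X.submatrix (·, i) (·, j)
  map_add' _ _ := rfl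
  map_smul' _ _ := rfl

variable {F : Type*} [Field F]

noncomputable def kroneckerQuotient (C : Matrix l l F) :
    Matrix (k × l) (k × l) F →ₗ[F] Matrix k k F :=
  open Classical in
  if h : ∃ ij : l × l, C ij.1 ij.2 ≠ 0 then
    (C h.choose.1 h.choose.2)⁻¹ • submatrixProdMkRight F h.choose.1 h.choose.2
  else 0

theorem kroneckerQuotient_kronecker_self (A : Matrix k k F) {B : Matrix l l F} (hB : B ≠ 0) :
    kroneckerQuotient B (A ⊗ₖ B) = A := by
  have h : ∃ ij : l × l, B ij.1 ij.2 ≠ 0 := by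
    by_contra! h
    exact hB (ext fun i j => h (i, j))
  rw [kroneckerQuotient, dif_pos h, LinearMap.smul_apply, submatrixProdMkRight_apply,
    kronecker_submatrix_prodMk, inv_smul_smul₀ h.choose_spec]

theorem kroneckerQuotient_reindex_prodAssoc_kronecker (A : Matrix k k F) (B : Matrix l l F)
    (C : Matrix (p × l) (p × l) F) :
    kroneckerQuotient B
        (reindex (Equiv.prodAssoc k p l).symm (Equiv.prodAssoc k p l).symm (A ⊗ₖ C)) =
      A ⊗ₖ kroneckerQuotient B C := by
  unfold kroneckerQuotient
  split_ifs
  · simp only [LinearMap.smul_apply, submatrixProdMkRight_apply,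
      reindex_prodAssoc_kronecker_submatrix_prodMk, kronecker_smul]
  · rw [LinearMap.zero_apply, LinearMap.zero_apply, kronecker_zero]

end Matrix

theorem stmt2 (F : Type*) [Field F] :
    ∃ Q : ∀ (k l : Type) [Fintype k] [DecidableEq k] [Fintype l] [DecidableEq l],
      Matrix (k × l) (k × l) F → Matrix l l F → Matrix k k F,
      (∀ (k l : Type) [Fintype k] [DecidableEq k] [Fintype l] [DecidableEq l]
        (A : Matrix k k F) (B : Matrix l l F), B ≠ 0 → Q k l (A ⊗ₖ B) B = A) ∧
      (∀ (k l : Type) [Fintype k] [DecidableEq k] [Fintype l] [DecidableEq l]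
        (A B : Matrix (k × l) (k × l) F) (C : Matrix l l F),
        Q k l (A + B) C = Q k l A C + Q k l B C) ∧
      (∀ (k l : Type) [Fintype k] [DecidableEq k] [Fintype l] [DecidableEq l]
        (c : F) (A : Matrix (k × l) (k × l) F) (C : Matrix l l F),
        Q k l (c • A) C = c • Q k l A C) ∧
      (∀ (k p l : Type) [Fintype k] [DecidableEq k] [Fintype p] [DecidableEq p]
        [Fintype l] [DecidableEq l]
        (A : Matrix k k F) (B : Matrix l l F) (C : Matrix (p × l) (p × l) F),
        Q (k × p) l (Matrix.reindex (Equiv.prodAssoc k p l).symm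
          (Equiv.prodAssoc k p l).symm (A ⊗ₖ C)) B = A ⊗ₖ Q p l C B) :=
  ⟨fun _ _ _ _ _ _ X C => kroneckerQuotient C X,
    fun _ _ _ _ _ _ A _ hB => kroneckerQuotient_kronecker_self A hB,
    fun _ _ _ _ _ _ _ _ C => map_add (kroneckerQuotient C) _ _,
    fun _ _ _ _ _ _ _ _ C => map_smul (kroneckerQuotient C) _ _,
    fun _ _ _ _ _ _ _ _ _ => kroneckerQuotient_reindex_prodAssoc_kronecker⟩
end

section
/- Let δ : F^{mn×mn} × F^{n×n} → F^{m×m} be a linear map satisfying δ(A⊕B, B) = A for all m×m matrices A and n×n matrices B. Then there exists α ∈ F^{m×m}⊗F^{n×n}⊗F^{m×m} such that δ(A,B) = tr₁₂(αᵀ(A⊗I_m − I_m⊗B⊗I_m)) for all A ∈ F^{mn×mn}, B ∈ F^{n×n}, and moreover tr₁₂(αᵀ(X⊗I_n⊗I_m)) = X for all X ∈ F^{m×m}. -/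
open Matrix Kronecker

/-- Partial trace over the first two tensor factors:
`tr12 (A ⊗ B ⊗ C) = tr A * tr B • C`. -/
def tr12 {F : Type*} [AddCommMonoid F] {α β γ : Type*} [Fintype α] [Fintype β]
    (M : Matrix ((α × β) × γ) ((α × β) × γ) F) : Matrix γ γ F :=
  Matrix.of fun c d => ∑ p : α × β, M (p, c) (p, d)

/-- Partial trace over the first tensor factor: `tr1 (A ⊗ B ⊗ C) = tr A • (B ⊗ C)`. -/
def tr1 {F : Type*} [AddCommMonoid F] {α β γ : Type*} [Fintype α]
    (M : Matrix ((α × β) × γ) ((α × β) × γ) F) : Matrix (β × γ) (β × γ) F :=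
  Matrix.of fun p q => ∑ i : α, M ((i, p.1), p.2) ((i, q.1), q.2)

/-- Partial trace over the middle tensor factor: `tr2 (A ⊗ B ⊗ C) = tr B • (A ⊗ C)`. -/
def tr2 {F : Type*} [AddCommMonoid F] {α β γ : Type*} [Fintype β]
    (M : Matrix ((α × β) × γ) ((α × β) × γ) F) : Matrix (α × γ) (α × γ) F :=
  Matrix.of fun p q => ∑ k : β, M ((p.1, k), p.2) ((q.1, k), q.2)

/-- Partial trace over the third tensor factor: `tr3 (A ⊗ B ⊗ C) = tr C • (A ⊗ B)`. -/
def tr3 {F : Type*} [AddCommMonoid F] {α β γ : Type*} [Fintype γ]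
    (M : Matrix ((α × β) × γ) ((α × β) × γ) F) : Matrix (α × β) (α × β) F :=
  Matrix.of fun p q => ∑ c : γ, M (p, c) (q, c)

/-- Partial trace over the second factor of a twofold Kronecker product:
`ptr (B ⊗ C) = tr C • B`. -/
def ptr {F : Type*} [AddCommMonoid F] {α β : Type*} [Fintype β]
    (M : Matrix (α × β) (α × β) F) : Matrix α α F :=
  Matrix.of fun i j => ∑ k : β, M (i, k) (j, k)

/-- Partial transpose in the third tensor factor: `pT3 (A ⊗ B ⊗ C) = A ⊗ B ⊗ Cᵀ`. -/
def pT3 {F : Type*} {α β γ : Type*}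
    (M : Matrix ((α × β) × γ) ((α × β) × γ) F) : Matrix ((α × β) × γ) ((α × β) × γ) F :=
  Matrix.of fun p q => M (p.1, q.2) (q.1, p.2)

/-- Partial transpose in the first two tensor factors:
`pT12 (A ⊗ B ⊗ C) = Aᵀ ⊗ Bᵀ ⊗ C`. -/
def pT12 {F : Type*} {α β γ : Type*}
    (M : Matrix ((α × β) × γ) ((α × β) × γ) F) : Matrix ((α × β) × γ) ((α × β) × γ) F :=
  Matrix.of fun p q => M (q.1, p.2) (p.1, q.2)

theorem stmt5 {F : Type*} [Field F] {m n : ℕ}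
    (δ : Matrix (Fin m × Fin n) (Fin m × Fin n) F → Matrix (Fin n) (Fin n) F →
      Matrix (Fin m) (Fin m) F)
    (hadd : ∀ A A' B B', δ (A + A') (B + B') = δ A B + δ A' B')
    (hsmul : ∀ (c : F) A B, δ (c • A) (c • B) = c • δ A B)
    (hdiff : ∀ (A : Matrix (Fin m) (Fin m) F) (B : Matrix (Fin n) (Fin n) F),
      δ (ksum A B) B = A) :
    ∃ α : Matrix ((Fin m × Fin n) × Fin m) ((Fin m × Fin n) × Fin m) F,
      (∀ (A : Matrix (Fin m × Fin n) (Fin m × Fin n) F) (B : Matrix (Fin n) (Fin n) F),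
        δ A B = tr12 (αᵀ * (A ⊗ₖ (1 : Matrix (Fin m) (Fin m) F) -
          ((1 : Matrix (Fin m) (Fin m) F) ⊗ₖ B) ⊗ₖ (1 : Matrix (Fin m) (Fin m) F)))) ∧
      (∀ X : Matrix (Fin m) (Fin m) F,
        tr12 (αᵀ * ((X ⊗ₖ (1 : Matrix (Fin n) (Fin n) F)) ⊗ₖ
          (1 : Matrix (Fin m) (Fin m) F))) = X) := by
  classical
  set L : Matrix (Fin m × Fin n) (Fin m × Fin n) F →ₗ[F] Matrix (Fin m) (Fin m) F :=
    { toFun := fun A => δ A 0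
      map_add' := fun A A' => by simpa using hadd A A' 0 0
      map_smul' := fun c A => by simpa using hsmul c A 0 }
  set α : Matrix ((Fin m × Fin n) × Fin m) ((Fin m × Fin n) × Fin m) F :=
    Matrix.of (fun qx py => L (Matrix.single qx.1 py.1 1) py.2 qx.2) with hα
  have key : ∀ A : Matrix (Fin m × Fin n) (Fin m × Fin n) F,
      tr12 (αᵀ * (A ⊗ₖ (1 : Matrix (Fin m) (Fin m) F))) = L A := by
    intro A
    nth_rewrite 2 [Matrix.matrix_eq_sum_single A]
    ext c d
    simp only [tr12, Matrix.of_apply, Matrix.mul_apply, Matrix.transpose_apply,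
      Matrix.kroneckerMap_apply, hα, map_sum, Matrix.sum_apply]
    rw [Finset.sum_comm]
    rw [Fintype.sum_prod_type]
    refine Finset.sum_congr rfl fun q _ => ?_
    rw [Finset.sum_comm]
    refine Finset.sum_congr rfl fun p _ => ?_
    have : Matrix.single q p (A q p) = A q p • Matrix.single q p (1 : F) := by
      rw [Matrix.smul_single, smul_eq_mul, mul_one]
    rw [this, _root_.map_smul]
    simp only [Matrix.smul_apply, smul_eq_mul]
    simp [Matrix.one_apply, mul_comm]
  have hX : ∀ X : Matrix (Fin m) (Fin m) F, L (X ⊗ₖ (1 : Matrix (Fin n) (Fin n) F)) = X := by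
    intro X
    have := hdiff X 0
    simpa [ksum, L] using this
  have hdelta : ∀ A B, δ A B = L A - L ((1 : Matrix (Fin m) (Fin m) F) ⊗ₖ B) := by
    intro A B
    have h1 : δ ((1 : Matrix (Fin m) (Fin m) F) ⊗ₖ B) B = 0 := by
      have := hdiff 0 B
      simpa [ksum] using this
    have h2 := hadd (A - (1 : Matrix (Fin m) (Fin m) F) ⊗ₖ B)
      ((1 : Matrix (Fin m) (Fin m) F) ⊗ₖ B) 0 B
    simp only [sub_add_cancel, zero_add] at h2
    rw [h2, h1, add_zero]
    have : L (A - (1 : Matrix (Fin m) (Fin m) F) ⊗ₖ B) =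
        L A - L ((1 : Matrix (Fin m) (Fin m) F) ⊗ₖ B) := map_sub L _ _
    rw [← this]; rfl
  refine ⟨α, ?_, ?_⟩
  · intro A B
    rw [hdelta A B, ← key A, ← key (((1 : Matrix (Fin m) (Fin m) F) ⊗ₖ B))]
    ext c d
    simp [tr12, Matrix.mul_apply, Finset.sum_sub_distrib,
      Matrix.sub_apply, mul_sub]
  · intro X
    rw [key (X ⊗ₖ (1 : Matrix (Fin n) (Fin n) F)), hX]
end

section
/- Let γ₁ ∈ F^{n×n} with tr(γ₁) = 1 and γ₀ ∈ F^{m×m}⊗F^{n×n}⊗F^{m×m} with tr₂(γ₀) = 0 (partial trace over the middle factor). Set α := Σ_{i,j=1}^m E_{ij}⊗γ₁⊗E_{ji} + γ₀. Then the map δ(A,B) := tr₁₂(αᵀ(A⊗I_m − I_m⊗B⊗I_m)) satisfies δ(A⊕B, B) = A for all A ∈ F^{m×m} and B ∈ F^{n×n}. -/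
open Matrix Kronecker

/-!
Subtracting `I ⊗ B ⊗ I` cancels the `B`-part of the Kronecker sum, leaving `A ⊗ I ⊗ I`.
Against `A ⊗ I ⊗ I` the contraction `tr₁₂ (Mᵀ * ·)` sees `M` only through `tr₂ M`; this kills
`γ₀` and turns the first summand of `α` into `tr γ₁ = 1` times the swap `∑ E_ij ⊗ E_ji`,
whose contraction with `A` is `A` itself.
-/

section KroneckerTrace

variable {F : Type*} {α β γ : Type*}

theorem tr2_sum [AddCommMonoid F] [Fintype β] {ι : Type*} (s : Finset ι)
    (M : ι → Matrix ((α × β) × γ) ((α × β) × γ) F) :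
    tr2 (∑ i ∈ s, M i) = ∑ i ∈ s, tr2 (M i) := by
  ext p q
  simp only [tr2, of_apply, Matrix.sum_apply]
  exact Finset.sum_comm

theorem tr2_add [AddCommMonoid F] [Fintype β] (M N : Matrix ((α × β) × γ) ((α × β) × γ) F) :
    tr2 (M + N) = tr2 M + tr2 N := by
  ext p q
  simp only [tr2, of_apply, Matrix.add_apply, Finset.sum_add_distrib]

theorem tr2_kronecker [CommSemiring F] [Fintype β]
    (X : Matrix α α F) (Y : Matrix β β F) (Z : Matrix γ γ F) :
    tr2 (X ⊗ₖ Y ⊗ₖ Z) = trace Y • (X ⊗ₖ Z) := by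
  ext p q
  simp only [tr2, of_apply, kroneckerMap_apply, Matrix.smul_apply, smul_eq_mul, trace, diag,
    Finset.sum_mul]
  exact Finset.sum_congr rfl fun _ _ => by ring

theorem tr12_transpose_mul_kronecker_one_apply [CommSemiring F] [Fintype α] [Fintype β]
    [Fintype γ] [DecidableEq β] [DecidableEq γ]
    (M : Matrix ((α × β) × γ) ((α × β) × γ) F) (A : Matrix α α F) (c d : γ) :
    tr12 (Mᵀ * (A ⊗ₖ (1 : Matrix β β F) ⊗ₖ (1 : Matrix γ γ F))) c d =
      ∑ i, ∑ j, A i j * tr2 M (i, d) (j, c) := by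
  simp only [tr12, tr2, of_apply, mul_apply, transpose_apply, kroneckerMap_apply, one_apply,
    Fintype.sum_prod_type, mul_ite, mul_one, mul_zero, Finset.sum_ite_eq', Finset.mem_univ,
    if_true, Finset.mul_sum]
  simp only [mul_comm (M _ _)]
  exact (Finset.sum_congr rfl fun _ _ => Finset.sum_comm).trans Finset.sum_comm

theorem sum_single_kronecker_single_apply [Semiring F] [Fintype α] [DecidableEq α] (i j c d : α) :
    (∑ a : α, ∑ b : α, single a b (1 : F) ⊗ₖ single b a (1 : F)) (i, d) (j, c) =
      if i = c ∧ j = d then 1 else 0 := by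
  simp only [Matrix.sum_apply, kroneckerMap_apply, single_apply, ite_and, ite_mul, one_mul,
    zero_mul, Finset.sum_ite_eq', Finset.sum_ite_irrel, Finset.mem_univ, if_true,
    Finset.sum_const_zero]
  split_ifs <;> rfl

theorem tr2_sum_single_kronecker_kronecker_single [CommSemiring F] [Fintype α] [Fintype β]
    [DecidableEq α] (Y : Matrix β β F) :
    tr2 (∑ i : α, ∑ j : α, single i j (1 : F) ⊗ₖ Y ⊗ₖ single j i (1 : F)) =
      trace Y • ∑ i : α, ∑ j : α, single i j (1 : F) ⊗ₖ single j i (1 : F) := by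
  simp only [tr2_sum, tr2_kronecker, Finset.smul_sum]

theorem ksum_kronecker_one_sub [Ring F] [Fintype α] [Fintype β] [DecidableEq α] [DecidableEq β]
    [DecidableEq γ] (A : Matrix α α F) (B : Matrix β β F) :
    ksum A B ⊗ₖ (1 : Matrix γ γ F) - ((1 : Matrix α α F) ⊗ₖ B) ⊗ₖ (1 : Matrix γ γ F) =
      A ⊗ₖ (1 : Matrix β β F) ⊗ₖ (1 : Matrix γ γ F) := by
  rw [ksum, add_kronecker, add_sub_cancel_right]

end KroneckerTrace

theorem stmt6 {F : Type*} [Field F] {m n : ℕ}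
    (γ₁ : Matrix (Fin n) (Fin n) F) (hγ₁ : trace γ₁ = 1)
    (γ₀ : Matrix ((Fin m × Fin n) × Fin m) ((Fin m × Fin n) × Fin m) F)
    (hγ₀ : tr2 γ₀ = 0) :
    ∀ (A : Matrix (Fin m) (Fin m) F) (B : Matrix (Fin n) (Fin n) F),
      tr12 (((∑ i : Fin m, ∑ j : Fin m,
          single i j (1 : F) ⊗ₖ γ₁ ⊗ₖ single j i (1 : F)) + γ₀)ᵀ *
        (ksum A B ⊗ₖ (1 : Matrix (Fin m) (Fin m) F) -
          ((1 : Matrix (Fin m) (Fin m) F) ⊗ₖ B) ⊗ₖ (1 : Matrix (Fin m) (Fin m) F))) = A := by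
  intro A B
  ext c d
  rw [ksum_kronecker_one_sub, tr12_transpose_mul_kronecker_one_apply, tr2_add, hγ₀, add_zero,
    tr2_sum_single_kronecker_kronecker_single, hγ₁, one_smul]
  simp only [sum_single_kronecker_single_apply, ite_and, mul_ite, mul_one, mul_zero,
    Finset.sum_ite_irrel, Finset.sum_ite_eq', Finset.mem_univ, if_true, Finset.sum_const_zero]
end

section
/- Let F be a field with characteristic not dividing n, and let δ : F^{mn×mn} × F^{n×n} → F^{m×m} be a linear map with δ(A⊕B, B) = A for all A, B. Then there exists γ ∈ F^{m×m}⊗F^{n×n}⊗F^{m×m} with tr₂(γ) = 0 such that δ(A,B) = (1/n)(Ptr(A) − tr(B)·I_m) + tr₁₂(γᵀ(A⊗I_m − I_m⊗B⊗I_m)) for all A ∈ F^{mn×mn}, B ∈ F^{n×n}. -/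
/-!
Removing the trace part, `φ A := δ A 0 - n⁻¹ • ptr A` is linear and kills every `A ⊗ I`, since
`δ (A ⊗ I) 0 = δ (A ⊕ 0) 0 = A` and `ptr (A ⊗ I) = n • A`. Any linear map `φ` has the form
`X ↦ tr₁₂ (γᵀ (X ⊗ I))` for a reindexed Choi matrix `γ` of `φ`, and the entries of `tr₂ γ` are
entries of the matrices `φ (E_ab ⊗ I) = 0`. Finally `δ (I ⊗ B) B = δ (0 ⊕ B) B = 0`, so
`δ A B = δ (A - I ⊗ B) 0 = n⁻¹ • (ptr A - tr B • I) + φ (A - I ⊗ B)`.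
-/

open Matrix Kronecker

theorem ptr_kronecker {F α β : Type*} [CommSemiring F] [Fintype β]
    (A : Matrix α α F) (B : Matrix β β F) : ptr (A ⊗ₖ B) = trace B • A := by
  ext i j
  simp [ptr, trace, Finset.mul_sum, mul_comm]

def ptrLinearMap (F α β : Type*) [CommSemiring F] [Fintype β] :
    Matrix (α × β) (α × β) F →ₗ[F] Matrix α α F where
  toFun := ptr
  map_add' A A' := by ext; simp [ptr, Finset.sum_add_distrib]
  map_smul' c A := by ext; simp [ptr, Finset.mul_sum]

theorem ptr_sub {F α β : Type*} [CommRing F] [Fintype β] (A A' : Matrix (α × β) (α × β) F) :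
    ptr (A - A') = ptr A - ptr A' :=
  map_sub (ptrLinearMap F α β) A A'

theorem sub_kronecker {R l m n p : Type*} [NonUnitalNonAssocRing R]
    (A₁ A₂ : Matrix l m R) (B : Matrix n p R) : (A₁ - A₂) ⊗ₖ B = A₁ ⊗ₖ B - A₂ ⊗ₖ B := by
  ext
  simp [sub_mul]

theorem sum_single_eq_single_kronecker_one {R α β : Type*} [Semiring R] [DecidableEq α]
    [Fintype β] [DecidableEq β] (a b : α) (c : R) :
    ∑ k : β, single (a, k) (b, k) c = single a b c ⊗ₖ (1 : Matrix β β R) := by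
  ext ⟨i, k⟩ ⟨j, l⟩
  rcases eq_or_ne k l with rfl | hkl
  · simp [Matrix.sum_apply, single_apply, ite_and]
  · rw [Matrix.sum_apply, Finset.sum_eq_zero fun k' _ => single_apply_of_ne _ _ _ _ _ ?_]
    · simp [hkl]
    · rintro ⟨⟨-, rfl⟩, -, rfl⟩
      exact hkl rfl

section Choi

variable {F α β γ : Type*} [CommSemiring F] [DecidableEq α] [DecidableEq β]

/-- A reindexed Choi matrix of `φ`, arranged so that `φ X = tr12 ((choiMatrix φ)ᵀ * (X ⊗ I))`. -/
def choiMatrix (φ : Matrix (α × β) (α × β) F →ₗ[F] Matrix γ γ F) :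
    Matrix ((α × β) × γ) ((α × β) × γ) F :=
  of fun p q => φ (single p.1 q.1 1) q.2 p.2

theorem tr12_choiMatrix_transpose_mul_kronecker_one [Fintype α] [Fintype β] [Fintype γ]
    [DecidableEq γ] (φ : Matrix (α × β) (α × β) F →ₗ[F] Matrix γ γ F)
    (X : Matrix (α × β) (α × β) F) :
    tr12 ((choiMatrix φ)ᵀ * (X ⊗ₖ (1 : Matrix γ γ F))) = φ X := by
  induction X using Matrix.induction_on' with
  | h_zero => ext; simp [tr12]
  | h_add X Y hX hY =>
    ext c d
    simp [← hX, ← hY, add_kronecker, Matrix.mul_add, tr12, Finset.sum_add_distrib]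
  | h_std_basis i j x =>
    ext c d
    rw [show single i j x = x • single i j 1 by simp, map_smul]
    simp only [tr12, choiMatrix, of_apply, mul_apply, transpose_apply, kroneckerMap_apply,
      one_apply, Matrix.smul_apply]
    simp [single_apply, ite_and, mul_comm, Fintype.sum_prod_type]

theorem tr2_choiMatrix_eq_zero [Fintype β] (φ : Matrix (α × β) (α × β) F →ₗ[F] Matrix γ γ F)
    (hφ : ∀ A : Matrix α α F, φ (A ⊗ₖ (1 : Matrix β β F)) = 0) : tr2 (choiMatrix φ) = 0 := by
  ext ⟨a, d⟩ ⟨b, c⟩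
  have h : (∑ k : β, φ (single (a, k) (b, k) 1)) c d = 0 := by
    rw [← map_sum, sum_single_eq_single_kronecker_one, hφ, Matrix.zero_apply]
  simpa [tr2, choiMatrix, Matrix.sum_apply] using h

end Choi

theorem stmt7 {F : Type*} [Field F] {m n : ℕ} (hn : (n : F) ≠ 0)
    (δ : Matrix (Fin m × Fin n) (Fin m × Fin n) F → Matrix (Fin n) (Fin n) F →
      Matrix (Fin m) (Fin m) F)
    (hadd : ∀ A A' B B', δ (A + A') (B + B') = δ A B + δ A' B')
    (hsmul : ∀ (c : F) A B, δ (c • A) (c • B) = c • δ A B)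
    (hdiff : ∀ (A : Matrix (Fin m) (Fin m) F) (B : Matrix (Fin n) (Fin n) F),
      δ (ksum A B) B = A) :
    ∃ γ : Matrix ((Fin m × Fin n) × Fin m) ((Fin m × Fin n) × Fin m) F,
      tr2 γ = 0 ∧
      ∀ (A : Matrix (Fin m × Fin n) (Fin m × Fin n) F) (B : Matrix (Fin n) (Fin n) F),
        δ A B = (1 / (n : F)) • (ptr A - trace B • (1 : Matrix (Fin m) (Fin m) F)) +
          tr12 (γᵀ * (A ⊗ₖ (1 : Matrix (Fin m) (Fin m) F) -
            ((1 : Matrix (Fin m) (Fin m) F) ⊗ₖ B) ⊗ₖ (1 : Matrix (Fin m) (Fin m) F))) := by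
  let L := IsLinearMap.mk' (R := F) (Function.uncurry δ)
    ⟨fun p q => hadd p.1 q.1 p.2 q.2, fun c p => hsmul c p.1 p.2⟩
  let φ := L ∘ₗ LinearMap.inl F _ _ - (n : F)⁻¹ • ptrLinearMap F (Fin m) (Fin n)
  have hφ (A) : φ A = δ A 0 - (n : F)⁻¹ • ptr A := rfl
  have hφ_kronecker_one (A : Matrix (Fin m) (Fin m) F) :
      φ (A ⊗ₖ (1 : Matrix (Fin n) (Fin n) F)) = 0 := by
    have h := hdiff A 0
    rw [ksum, kronecker_zero, add_zero] at h
    rw [hφ, h, ptr_kronecker, trace_one, Fintype.card_fin, smul_smul, inv_mul_cancel₀ hn,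
      one_smul, sub_self]
  have hδ (A B) : δ A B = δ (A - 1 ⊗ₖ B) 0 := by
    have h := hadd (A - 1 ⊗ₖ B) (1 ⊗ₖ B) 0 B
    rw [sub_add_cancel, zero_add] at h
    simpa [h, ksum] using hdiff 0 B
  refine ⟨choiMatrix φ, tr2_choiMatrix_eq_zero φ hφ_kronecker_one, fun A B => ?_⟩
  rw [← sub_kronecker, tr12_choiMatrix_transpose_mul_kronecker_one, hφ, ← hδ, ptr_sub,
    ptr_kronecker, one_div, add_sub_cancel]
end

section
/- Let α ∈ F^{m×m}⊗F^{n×n}⊗F^{m×m} and define δ(A,B) := tr₁₂(αᵀ(A⊗I_m − I_m⊗B⊗I_m)). Then δ(Aᵀ,Bᵀ) = δ(A,B)ᵀ holds for all A ∈ F^{mn×mn} and B ∈ F^{n×n} if and only if T₃(α) = T₃(αᵀ), where T₃ is the partial transpose in the third tensor factor. -/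
open Matrix Kronecker

section helpers
variable {F : Type*} [Field F] {m n : ℕ}
  (α : Matrix ((Fin m × Fin n) × Fin m) ((Fin m × Fin n) × Fin m) F)

lemma tr12_sub (M N : Matrix ((Fin m × Fin n) × Fin m) ((Fin m × Fin n) × Fin m) F) :
    tr12 (M - N) = tr12 M - tr12 N := by
  ext c d
  simp [tr12, Finset.sum_sub_distrib]

lemma trA (A : Matrix (Fin m × Fin n) (Fin m × Fin n) F) :
    tr12 (αᵀ * (A ⊗ₖ (1 : Matrix (Fin m) (Fin m) F)))
      = Matrix.of (fun c d => ∑ p : Fin m × Fin n, ∑ q : Fin m × Fin n,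
          α (q, d) (p, c) * A q p) := by
  ext c d
  simp only [tr12, Matrix.of_apply, Matrix.mul_apply, Matrix.transpose_apply,
    Matrix.kroneckerMap_apply, Matrix.one_apply]
  refine Finset.sum_congr rfl fun p _ => ?_
  rw [Fintype.sum_prod_type, Finset.sum_comm]
  simp [mul_ite, mul_comm]

lemma trB (B : Matrix (Fin n) (Fin n) F) :
    tr12 (αᵀ * (((1 : Matrix (Fin m) (Fin m) F) ⊗ₖ B) ⊗ₖ (1 : Matrix (Fin m) (Fin m) F)))
      = Matrix.of (fun c d => ∑ p : Fin m × Fin n, ∑ k : Fin n,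
          α ((p.1, k), d) (p, c) * B k p.2) := by
  ext c d
  simp only [tr12, Matrix.of_apply, Matrix.mul_apply, Matrix.transpose_apply,
    Matrix.kroneckerMap_apply, Matrix.one_apply]
  refine Finset.sum_congr rfl fun p _ => ?_
  rw [Fintype.sum_prod_type, Finset.sum_comm]
  simp only [mul_ite, mul_one, mul_zero, ite_mul, one_mul, zero_mul,
    Finset.sum_ite_eq', Finset.mem_univ, if_true]
  rw [Finset.sum_comm]
  simp only [Finset.sum_ite_eq', Finset.mem_univ, if_true]
  rw [Fintype.sum_prod_type, Finset.sum_comm]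
  simp [mul_comm]
end helpers

theorem stmt8 {F : Type*} [Field F] {m n : ℕ}
    (α : Matrix ((Fin m × Fin n) × Fin m) ((Fin m × Fin n) × Fin m) F) :
    (∀ (A : Matrix (Fin m × Fin n) (Fin m × Fin n) F) (B : Matrix (Fin n) (Fin n) F),
      tr12 (αᵀ * (Aᵀ ⊗ₖ (1 : Matrix (Fin m) (Fin m) F) -
          ((1 : Matrix (Fin m) (Fin m) F) ⊗ₖ Bᵀ) ⊗ₖ (1 : Matrix (Fin m) (Fin m) F)))
        = (tr12 (αᵀ * (A ⊗ₖ (1 : Matrix (Fin m) (Fin m) F) -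
          ((1 : Matrix (Fin m) (Fin m) F) ⊗ₖ B) ⊗ₖ (1 : Matrix (Fin m) (Fin m) F))))ᵀ) ↔
    pT3 α = pT3 αᵀ := by
  constructor
  · intro h
    have key : ∀ (p q : Fin m × Fin n) (c d : Fin m),
        α (q, d) (p, c) = α (p, c) (q, d) := by
      intro p q c d
      have h1 := h (Matrix.single p q 1) 0
      have h2 := congrArg (fun M => M c d) h1
      simp only [mul_sub, tr12_sub, trA, trB, Matrix.transpose_zero, Matrix.zero_apply,
        mul_zero, Finset.sum_const_zero, Matrix.transpose_apply, Matrix.sub_apply,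
        Matrix.of_apply, sub_zero] at h2
      simpa [Matrix.single, Matrix.transpose_apply, ite_and, mul_ite,
        Finset.sum_ite_eq, Finset.sum_ite_eq'] using h2
    ext x y
    simp only [pT3, Matrix.of_apply, Matrix.transpose_apply]
    exact key y.1 x.1 x.2 y.2
  · intro h A B
    have key : ∀ (p q : Fin m × Fin n) (c d : Fin m),
        α (p, d) (q, c) = α (q, c) (p, d) := by
      intro p q c d
      have h2 := congrArg (fun M => M (p, c) (q, d)) h
      simpa [pT3] using h2
    rw [mul_sub, mul_sub, tr12_sub, tr12_sub, trB, trB, trA, trA]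
    ext c d
    simp only [Matrix.transpose_apply, Matrix.sub_apply, Matrix.of_apply]
    congr 1
    · rw [Finset.sum_comm]
      refine Finset.sum_congr rfl fun p _ => Finset.sum_congr rfl fun q _ => ?_
      exact congrArg (fun t => t * A q p) (key p q c d)
    · rw [Fintype.sum_prod_type, Fintype.sum_prod_type]
      refine Finset.sum_congr rfl fun i _ => ?_
      rw [Finset.sum_comm]
      refine Finset.sum_congr rfl fun a _ => Finset.sum_congr rfl fun b _ => ?_
      exact congrArg (fun t => t * B b a) (key (i, a) (i, b) c d)
end

section
/- Let F be a field with char(F) ∤ n, γ ∈ F^{m×m}⊗F^{n×n}⊗F^{m×m} with tr₂(γ) = 0, α := (1/n)Σ_{i,j=1}^m E_{ij}⊗I_n⊗E_{ji} + γ, and δ(A,B) := tr₁₂(αᵀ(A⊗I_m − I_m⊗B⊗I_m)). Then tr(δ(A,B)) = (1/n)(tr(A) − m·tr(B)) for all A ∈ F^{mn×mn}, B ∈ F^{n×n}, if and only if tr₃(γ) = 0. -/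
open Matrix Kronecker

/-!
Since `tr (tr₁₂ X) = tr X` and `tr (Mᵀ * N)` is the entrywise pairing `∑ M i j * N i j`, pairing
`α` with `A ⊗ 1` only sees the partial trace `tr₃ α`, and pairing with `1 ⊗ B ⊗ 1` only sees
`tr₁ (tr₃ α)`, the partial trace of `tr₃ α` over its first factor. The swap term of `α` has `tr₃` equal to the identity,
so with `G = tr₃ γ` the left-hand side is `(1/n)(tr A - m tr B) + ⟨G, A⟩ - ⟨tr₁ G, B⟩`. This
correction vanishes for all `A, B` iff `G = 0`: take `B = 0` and `A` a matrix unit.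
-/

section PartialTrace

variable {R ι κ : Type*}

def ptrLeft [AddCommMonoid R] [Fintype ι] (M : Matrix (ι × κ) (ι × κ) R) : Matrix κ κ R :=
  of fun k l => ∑ i, M (i, k) (i, l)

lemma tr3_eq_ptr [AddCommMonoid R] {α β γ : Type*} [Fintype γ]
    (M : Matrix ((α × β) × γ) ((α × β) × γ) R) : tr3 M = ptr M :=
  rfl

lemma trace_tr12 [AddCommMonoid R] {α β γ : Type*} [Fintype α] [Fintype β] [Fintype γ]
    (M : Matrix ((α × β) × γ) ((α × β) × γ) R) : trace (tr12 M) = trace M := by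
  simp only [trace, tr12, diag_apply, of_apply, Fintype.sum_prod_type]
  exact Finset.sum_comm.trans (Finset.sum_congr rfl fun _ _ => Finset.sum_comm)

lemma ptr_add [AddCommMonoid R] [Fintype κ] (M N : Matrix (ι × κ) (ι × κ) R) :
    ptr (M + N) = ptr M + ptr N := by
  ext; simp [ptr, Finset.sum_add_distrib]

lemma ptr_smul [NonUnitalNonAssocSemiring R] [Fintype κ] (c : R) (M : Matrix (ι × κ) (ι × κ) R) :
    ptr (c • M) = c • ptr M := by
  ext; simp [ptr, Finset.mul_sum]

lemma ptrLeft_zero [AddCommMonoid R] [Fintype ι] :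
    ptrLeft (0 : Matrix (ι × κ) (ι × κ) R) = 0 := by
  ext; simp [ptrLeft]

lemma ptrLeft_add [AddCommMonoid R] [Fintype ι] (M N : Matrix (ι × κ) (ι × κ) R) :
    ptrLeft (M + N) = ptrLeft M + ptrLeft N := by
  ext; simp [ptrLeft, Finset.sum_add_distrib]

lemma ptrLeft_smul [NonUnitalNonAssocSemiring R] [Fintype ι] (c : R)
    (M : Matrix (ι × κ) (ι × κ) R) : ptrLeft (c • M) = c • ptrLeft M := by
  ext; simp [ptrLeft, Finset.mul_sum]

lemma ptrLeft_one [NonAssocSemiring R] [Fintype ι] [DecidableEq ι] [DecidableEq κ] :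
    ptrLeft (1 : Matrix (ι × κ) (ι × κ) R) = (Fintype.card ι : R) • 1 := by
  ext k l; by_cases h : k = l <;> simp [ptrLeft, one_apply, h]

lemma ptr_sum_single_kronecker_one_kronecker_single [NonAssocSemiring R] [Fintype ι]
    [DecidableEq ι] [DecidableEq κ] :
    ptr (∑ i : ι, ∑ j : ι, single i j (1 : R) ⊗ₖ (1 : Matrix κ κ R) ⊗ₖ single j i (1 : R)) = 1 := by
  ext ⟨i, k⟩ ⟨j, l⟩
  simp only [ptr, single, ite_and, Matrix.sum_apply, kroneckerMap_apply, of_apply, one_apply,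
    mul_ite, mul_one, mul_zero, Finset.sum_ite_eq', Finset.mem_univ, ↓reduceIte,
    Finset.sum_ite_irrel, Finset.sum_const_zero, Prod.mk.injEq]
  split_ifs <;> rfl

lemma trace_transpose_mul_kronecker_one [CommSemiring R] [Fintype ι] [Fintype κ] [DecidableEq κ]
    (M : Matrix (ι × κ) (ι × κ) R) (A : Matrix ι ι R) :
    trace (Mᵀ * (A ⊗ₖ (1 : Matrix κ κ R))) = trace ((ptr M)ᵀ * A) := by
  simp only [trace, diag_apply, mul_apply, transpose_apply, kroneckerMap_apply, one_apply,
    mul_ite, mul_one, mul_zero, Fintype.sum_prod_type, Finset.sum_ite_eq', Finset.mem_univ,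
    ↓reduceIte, ptr, of_apply, Finset.sum_mul]
  exact Finset.sum_congr rfl fun _ _ => Finset.sum_comm

lemma trace_transpose_mul_one_kronecker [CommSemiring R] [Fintype ι] [Fintype κ] [DecidableEq ι]
    (M : Matrix (ι × κ) (ι × κ) R) (B : Matrix κ κ R) :
    trace (Mᵀ * ((1 : Matrix ι ι R) ⊗ₖ B)) = trace ((ptrLeft M)ᵀ * B) := by
  simp only [trace, diag_apply, mul_apply, transpose_apply, kroneckerMap_apply, one_apply,
    ite_mul, one_mul, zero_mul, mul_ite, mul_zero, Fintype.sum_prod_type, Finset.sum_ite_irrel,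
    Finset.sum_const_zero, Finset.sum_ite_eq', Finset.mem_univ, ↓reduceIte, ptrLeft, of_apply,
    Finset.sum_mul]
  exact Finset.sum_comm.trans (Finset.sum_congr rfl fun _ _ => Finset.sum_comm)

lemma trace_tr12_transpose_mul_sub [CommRing R] {α β γ : Type*} [Fintype α] [Fintype β]
    [Fintype γ] [DecidableEq α] [DecidableEq γ] (M : Matrix ((α × β) × γ) ((α × β) × γ) R)
    (A : Matrix (α × β) (α × β) R) (B : Matrix β β R) :
    trace (tr12 (Mᵀ * (A ⊗ₖ (1 : Matrix γ γ R) -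
        ((1 : Matrix α α R) ⊗ₖ B) ⊗ₖ (1 : Matrix γ γ R)))) =
      trace ((ptr M)ᵀ * A) - trace ((ptrLeft (ptr M))ᵀ * B) := by
  rw [trace_tr12, Matrix.mul_sub, trace_sub, trace_transpose_mul_kronecker_one,
    trace_transpose_mul_kronecker_one, trace_transpose_mul_one_kronecker]

lemma eq_zero_of_forall_trace_transpose_mul_eq_zero [NonAssocSemiring R] [Fintype ι]
    {M : Matrix ι ι R} (h : ∀ A, trace (Mᵀ * A) = 0) : M = 0 := by
  classical
  ext i j
  simpa [trace_mul_single] using h (single i j 1)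

end PartialTrace

theorem stmt9_general {F : Type*} [Field F] {m n : ℕ}
    (γ : Matrix ((Fin m × Fin n) × Fin m) ((Fin m × Fin n) × Fin m) F)
    (α : Matrix ((Fin m × Fin n) × Fin m) ((Fin m × Fin n) × Fin m) F)
    (hα : α = (1 / (n : F)) • (∑ i : Fin m, ∑ j : Fin m,
      single i j (1 : F) ⊗ₖ (1 : Matrix (Fin n) (Fin n) F) ⊗ₖ
        single j i (1 : F)) + γ) :
    (∀ (A : Matrix (Fin m × Fin n) (Fin m × Fin n) F) (B : Matrix (Fin n) (Fin n) F),
      trace (tr12 (αᵀ * (A ⊗ₖ (1 : Matrix (Fin m) (Fin m) F) -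
          ((1 : Matrix (Fin m) (Fin m) F) ⊗ₖ B) ⊗ₖ (1 : Matrix (Fin m) (Fin m) F))))
        = (1 / (n : F)) * (trace A - (m : F) * trace B)) ↔
    tr3 γ = 0 := by
  have hptr : ptr α = (1 / (n : F)) • 1 + ptr γ := by
    rw [hα, ptr_add, ptr_smul, ptr_sum_single_kronecker_one_kronecker_single]
  have hδ : ∀ A B, trace ((ptr α)ᵀ * A) - trace ((ptrLeft (ptr α))ᵀ * B) =
      (1 / (n : F)) * (trace A - (m : F) * trace B) +
        (trace ((ptr γ)ᵀ * A) - trace ((ptrLeft (ptr γ))ᵀ * B)) := by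
    intro A B
    simp only [hptr, ptrLeft_add, ptrLeft_smul, ptrLeft_one, transpose_add, transpose_smul,
      transpose_one, Matrix.add_mul, smul_mul, Matrix.one_mul, trace_add, trace_smul,
      Fintype.card_fin, smul_eq_mul]
    ring
  simp only [trace_tr12_transpose_mul_sub, hδ, add_eq_left, sub_eq_zero, tr3_eq_ptr]
  constructor
  · intro h
    exact eq_zero_of_forall_trace_transpose_mul_eq_zero fun A => by simpa using h A 0
  · intro h A B
    simp [h, ptrLeft_zero]

theorem stmt9 {F : Type*} [Field F] {m n : ℕ} (hn : (n : F) ≠ 0)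
    (γ : Matrix ((Fin m × Fin n) × Fin m) ((Fin m × Fin n) × Fin m) F)
    (hγ : tr2 γ = 0)
    (α : Matrix ((Fin m × Fin n) × Fin m) ((Fin m × Fin n) × Fin m) F)
    (hα : α = (1 / (n : F)) • (∑ i : Fin m, ∑ j : Fin m,
      single i j (1 : F) ⊗ₖ (1 : Matrix (Fin n) (Fin n) F) ⊗ₖ
        single j i (1 : F)) + γ) :
    (∀ (A : Matrix (Fin m × Fin n) (Fin m × Fin n) F) (B : Matrix (Fin n) (Fin n) F),
      trace (tr12 (αᵀ * (A ⊗ₖ (1 : Matrix (Fin m) (Fin m) F) -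
          ((1 : Matrix (Fin m) (Fin m) F) ⊗ₖ B) ⊗ₖ (1 : Matrix (Fin m) (Fin m) F))))
        = (1 / (n : F)) * (trace A - (m : F) * trace B)) ↔
    tr3 γ = 0 :=
  stmt9_general γ α hα
end

section
/- Let β₁, β₂ ∈ F^{n×n} with tr(β₁) = tr(β₂) = 1, and γ₁, γ₂ ∈ F^{m×m}⊗F^{n×n}⊗F^{m×m} with tr₁(γ₁) = tr₁(γ₂) = 0. Define α_k := Σ_{i,j=1}^m E_{ij}⊗β_k⊗E_{ji} + γ_k and δ_k(C,D) := tr₁₂(α_kᵀ(C⊗I_m − I_m⊗D⊗I_m)) for k = 1,2. Then δ₁ = δ₂ (as functions on F^{mn×mn} × F^{n×n}) if and only if β₁ = β₂ and γ₁ = γ₂. -/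
open Matrix Kronecker

/-!
Testing `δ` against `C = E_{qp} ⊗ I_m` and `D = 0` reads off the single entry `α (q, e) (p, c)`,
so `δ₁ = δ₂` forces `α₁ = α₂`. The partial trace `tr₁` then recovers `β_k ⊗ I_m` from `α_k`,
because `tr₁ γ_k = 0`; as `m > 0` this gives `β₁ = β₂`, and cancelling the common swap part
gives `γ₁ = γ₂`.
-/

section PartialTrace

variable {F : Type*} {α β γ : Type*}

lemma tr1_add [AddCommMonoid F] [Fintype α] (M N : Matrix ((α × β) × γ) ((α × β) × γ) F) :
    tr1 (M + N) = tr1 M + tr1 N := by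
  ext p q
  simp [tr1, Finset.sum_add_distrib]

lemma tr1_sum_single_kronecker_single [Semiring F] [Fintype α] [DecidableEq α]
    (B : Matrix β β F) :
    tr1 (∑ i : α, ∑ j : α, single i j (1 : F) ⊗ₖ B ⊗ₖ single j i (1 : F))
      = B ⊗ₖ (1 : Matrix α α F) := by
  ext ⟨b, e⟩ ⟨b', e'⟩
  simp [tr1, kroneckerMap_apply, single, one_apply, Finset.sum_ite_eq',
    Matrix.sum_apply, ite_and, eq_comm]

lemma tr12_transpose_mul_single_kronecker_one [NonAssocSemiring F]
    [Fintype α] [Fintype β] [Fintype γ] [DecidableEq α] [DecidableEq β] [DecidableEq γ]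
    (M : Matrix ((α × β) × γ) ((α × β) × γ) F) (q p : α × β) (c e : γ) :
    tr12 (Mᵀ * (single q p (1 : F) ⊗ₖ (1 : Matrix γ γ F))) c e = M (q, e) (p, c) := by
  simp [tr12, mul_apply, kroneckerMap_apply, one_apply, single, Fintype.sum_prod_type,
    Finset.sum_ite_eq, Finset.sum_ite_eq', Prod.ext_iff, ite_and]

lemma eq_of_forall_tr12_transpose_mul_kronecker_one_eq [NonAssocSemiring F]
    [Fintype α] [Fintype β] [Fintype γ] [DecidableEq α] [DecidableEq β] [DecidableEq γ]
    {M N : Matrix ((α × β) × γ) ((α × β) × γ) F}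
    (h : ∀ C : Matrix (α × β) (α × β) F,
      tr12 (Mᵀ * (C ⊗ₖ (1 : Matrix γ γ F))) = tr12 (Nᵀ * (C ⊗ₖ (1 : Matrix γ γ F)))) :
    M = N := by
  ext ⟨q, e⟩ ⟨p, c⟩
  simpa only [tr12_transpose_mul_single_kronecker_one] using
    congrFun (congrFun (h (single q p 1)) c) e

end PartialTrace

lemma kronecker_one_injective {R ι κ : Type*} [MulZeroOneClass R] [DecidableEq κ] [Nonempty κ] :
    Function.Injective fun B : Matrix ι ι R => B ⊗ₖ (1 : Matrix κ κ R) := by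
  intro B B' h
  obtain ⟨k⟩ := ‹Nonempty κ›
  ext i j
  simpa [kroneckerMap_apply] using congrFun (congrFun h (i, k)) (j, k)

theorem stmt10_general {F : Type*} [Field F] {m n : ℕ} (hm : 0 < m)
    (β₁ β₂ : Matrix (Fin n) (Fin n) F)
    (γ₁ γ₂ : Matrix ((Fin m × Fin n) × Fin m) ((Fin m × Fin n) × Fin m) F)
    (hγ₁ : tr1 γ₁ = 0) (hγ₂ : tr1 γ₂ = 0)
    (α₁ α₂ : Matrix ((Fin m × Fin n) × Fin m) ((Fin m × Fin n) × Fin m) F)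
    (hα₁ : α₁ = (∑ i : Fin m, ∑ j : Fin m,
      single i j (1 : F) ⊗ₖ β₁ ⊗ₖ single j i (1 : F)) + γ₁)
    (hα₂ : α₂ = (∑ i : Fin m, ∑ j : Fin m,
      single i j (1 : F) ⊗ₖ β₂ ⊗ₖ single j i (1 : F)) + γ₂) :
    (∀ (C : Matrix (Fin m × Fin n) (Fin m × Fin n) F) (D : Matrix (Fin n) (Fin n) F),
      tr12 (α₁ᵀ * (C ⊗ₖ (1 : Matrix (Fin m) (Fin m) F) -
          ((1 : Matrix (Fin m) (Fin m) F) ⊗ₖ D) ⊗ₖ (1 : Matrix (Fin m) (Fin m) F)))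
        = tr12 (α₂ᵀ * (C ⊗ₖ (1 : Matrix (Fin m) (Fin m) F) -
          ((1 : Matrix (Fin m) (Fin m) F) ⊗ₖ D) ⊗ₖ (1 : Matrix (Fin m) (Fin m) F)))) ↔
    (β₁ = β₂ ∧ γ₁ = γ₂) := by
  refine ⟨fun h => ?_, fun ⟨hβ, hγ⟩ _ _ => by rw [hα₁, hα₂, hβ, hγ]⟩
  have hα : α₁ = α₂ := eq_of_forall_tr12_transpose_mul_kronecker_one_eq fun C => by
    simpa only [kroneckerMap_zero_right _ mul_zero, zero_kronecker, sub_zero] using h C 0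
  have tr1_α {β : Matrix (Fin n) (Fin n) F}
      {γ : Matrix ((Fin m × Fin n) × Fin m) ((Fin m × Fin n) × Fin m) F} (hγ : tr1 γ = 0) :
      tr1 ((∑ i : Fin m, ∑ j : Fin m, single i j (1 : F) ⊗ₖ β ⊗ₖ single j i (1 : F)) + γ)
        = β ⊗ₖ (1 : Matrix (Fin m) (Fin m) F) := by
    rw [tr1_add, tr1_sum_single_kronecker_single, hγ, add_zero]
  have : Nonempty (Fin m) := Fin.pos_iff_nonempty.mp hm
  have hβ : β₁ = β₂ := kronecker_one_injective <| by
    dsimp only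
    rw [← tr1_α hγ₁, ← tr1_α hγ₂, ← hα₁, ← hα₂, hα]
  rw [hα₁, hα₂, hβ] at hα
  exact ⟨hβ, add_left_cancel hα⟩

theorem stmt10 {F : Type*} [Field F] {m n : ℕ} (hm : 0 < m)
    (β₁ β₂ : Matrix (Fin n) (Fin n) F) (hβ₁ : trace β₁ = 1) (hβ₂ : trace β₂ = 1)
    (γ₁ γ₂ : Matrix ((Fin m × Fin n) × Fin m) ((Fin m × Fin n) × Fin m) F)
    (hγ₁ : tr1 γ₁ = 0) (hγ₂ : tr1 γ₂ = 0)
    (α₁ α₂ : Matrix ((Fin m × Fin n) × Fin m) ((Fin m × Fin n) × Fin m) F)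
    (hα₁ : α₁ = (∑ i : Fin m, ∑ j : Fin m,
      single i j (1 : F) ⊗ₖ β₁ ⊗ₖ single j i (1 : F)) + γ₁)
    (hα₂ : α₂ = (∑ i : Fin m, ∑ j : Fin m,
      single i j (1 : F) ⊗ₖ β₂ ⊗ₖ single j i (1 : F)) + γ₂) :
    (∀ (C : Matrix (Fin m × Fin n) (Fin m × Fin n) F) (D : Matrix (Fin n) (Fin n) F),
      tr12 (α₁ᵀ * (C ⊗ₖ (1 : Matrix (Fin m) (Fin m) F) -
          ((1 : Matrix (Fin m) (Fin m) F) ⊗ₖ D) ⊗ₖ (1 : Matrix (Fin m) (Fin m) F)))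
        = tr12 (α₂ᵀ * (C ⊗ₖ (1 : Matrix (Fin m) (Fin m) F) -
          ((1 : Matrix (Fin m) (Fin m) F) ⊗ₖ D) ⊗ₖ (1 : Matrix (Fin m) (Fin m) F)))) ↔
    (β₁ = β₂ ∧ γ₁ = γ₂) :=
  stmt10_general hm β₁ β₂ γ₁ γ₂ hγ₁ hγ₂ α₁ α₂ hα₁ hα₂
end

section
/- Let υ_n ∈ F^{n×n} for each n ∈ ℕ with tr(υ_n) = 1, and define A ⊖ B := tr₁₂(α_{m,n}ᵀ(A⊗I_m − I_m⊗B⊗I_m)) where α_{m,n} := Σ_{i,j=1}^m E_{ij}⊗υ_n⊗E_{ji}. Then ⊖ is a uniform Kronecker difference; in particular (A⊕C)⊖B = A⊕(C⊖B) for all A ∈ F^{m×m}, B ∈ F^{n×n}, C ∈ F^{pn×pn}. -/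
/-!
Unfolding `α_{m,n}`, the matrix `tr₁₂(α_{m,n}ᵀ X)` pairs `υ_n` against the second tensor factor
of `X`, so `A ⊖ B = tr₂((I ⊗ υ_nᵀ) A) − tr(υ_nᵀ B) · I`. The map `A ↦ tr₂((I ⊗ uᵀ) A)` is linear,
sends `A ⊗ I` to `tr(u) · A` and `I ⊗ B` to `tr(uᵀ B) · I`, and commutes with tensoring by an outer
factor; with `tr υ_n = 1` this gives all properties of a uniform Kronecker difference.
-/

open Matrix Kronecker

/-- The Kronecker difference generated by the family `υ`:
`A ⊖ B = tr₁₂(α_{m,n}ᵀ (A ⊗ I_m − I_m ⊗ B ⊗ I_m))` with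
`α_{m,n} = ∑ i j, E i j ⊗ υ n ⊗ E j i`. -/
def kdiff {F : Type*} [Field F] (υ : ∀ n : ℕ, Matrix (Fin n) (Fin n) F)
    {α : Type*} [Fintype α] [DecidableEq α] {n : ℕ}
    (A : Matrix (α × Fin n) (α × Fin n) F) (B : Matrix (Fin n) (Fin n) F) :
    Matrix α α F :=
  tr12 ((∑ i : α, ∑ j : α,
      single i j (1 : F) ⊗ₖ υ n ⊗ₖ single j i (1 : F))ᵀ *
    (A ⊗ₖ (1 : Matrix α α F) -
      ((1 : Matrix α α F) ⊗ₖ B) ⊗ₖ (1 : Matrix α α F)))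

namespace Matrix

variable {R : Type*} [CommSemiring R] {ι κ β : Type*}

theorem sum_single_kronecker_single [Fintype ι] [DecidableEq ι] (u : Matrix β β R) :
    ∑ i : ι, ∑ j : ι, single i j (1 : R) ⊗ₖ u ⊗ₖ single j i (1 : R) =
      of fun (p q : (ι × β) × ι) => if p.1.1 = q.2 ∧ q.1.1 = p.2 then u p.1.2 q.1.2 else 0 := by
  ext ⟨⟨i', l⟩, e⟩ ⟨⟨j', k⟩, f⟩
  simp [sum_apply, single, ite_and, Finset.sum_ite_eq, eq_comm, and_comm]

variable [Fintype β]

/-- The partial trace `tr₂((1 ⊗ uᵀ) A)`. -/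
def pairSnd (u : Matrix β β R) : Matrix (ι × β) (ι × β) R →ₗ[R] Matrix ι ι R where
  toFun A := of fun c d => ∑ k, ∑ l, u l k * A (c, l) (d, k)
  map_add' A A' := by ext; simp [mul_add, Finset.sum_add_distrib]
  map_smul' r A := by ext; simp [Finset.mul_sum, mul_left_comm]

@[simp]
theorem pairSnd_apply (u : Matrix β β R) (A : Matrix (ι × β) (ι × β) R) (c d : ι) :
    pairSnd u A c d = ∑ k, ∑ l, u l k * A (c, l) (d, k) :=
  rfl

theorem trace_transpose_mul_eq_sum (u B : Matrix β β R) :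
    trace (uᵀ * B) = ∑ k, ∑ l, u l k * B l k :=
  rfl

theorem pairSnd_kronecker_one [DecidableEq β] (u : Matrix β β R) (A : Matrix ι ι R) :
    pairSnd u (A ⊗ₖ (1 : Matrix β β R)) = trace u • A := by
  ext c d
  simp [trace, one_apply, Finset.sum_mul]

theorem pairSnd_one [DecidableEq ι] [DecidableEq β] (u : Matrix β β R) :
    pairSnd u (1 : Matrix (ι × β) (ι × β) R) = trace u • 1 := by
  rw [← one_kronecker_one, pairSnd_kronecker_one]

theorem pairSnd_one_kronecker [DecidableEq ι] (u : Matrix β β R) (B : Matrix β β R) :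
    pairSnd u ((1 : Matrix ι ι R) ⊗ₖ B) = trace (uᵀ * B) • 1 := by
  ext c d
  rw [trace_transpose_mul_eq_sum]
  by_cases hcd : c = d <;> simp [hcd]

theorem pairSnd_kronecker_assoc (u : Matrix β β R) (A : Matrix ι ι R)
    (N : Matrix (κ × β) (κ × β) R) :
    pairSnd u (reindex (Equiv.prodAssoc ι κ β).symm (Equiv.prodAssoc ι κ β).symm (A ⊗ₖ N)) =
      A ⊗ₖ pairSnd u N := by
  ext ⟨a, s⟩ ⟨b, q⟩
  simp [Finset.mul_sum, mul_left_comm]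

end Matrix

theorem kdiff_eq_pairSnd {F : Type*} [Field F] (υ : ∀ n : ℕ, Matrix (Fin n) (Fin n) F)
    {α : Type*} [Fintype α] [DecidableEq α] {n : ℕ}
    (A : Matrix (α × Fin n) (α × Fin n) F) (B : Matrix (Fin n) (Fin n) F) :
    kdiff υ A B = pairSnd (υ n) A - trace ((υ n)ᵀ * B) • 1 := by
  ext c d
  simp only [kdiff, sum_single_kronecker_single, tr12, of_apply, mul_apply, transpose_apply,
    Matrix.sub_apply, Matrix.smul_apply, kroneckerMap_apply, one_apply, Fintype.sum_prod_type,
    pairSnd_apply, trace_transpose_mul_eq_sum]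
  by_cases hcd : c = d <;> simp [hcd, ite_and, mul_sub, Finset.sum_sub_distrib]

theorem stmt11 {F : Type*} [Field F] (υ : ∀ n : ℕ, Matrix (Fin n) (Fin n) F)
    (hυ : ∀ n : ℕ, 0 < n → trace (υ n) = 1) :
    (∀ (m n : ℕ), 0 < n → ∀ (A : Matrix (Fin m) (Fin m) F) (B : Matrix (Fin n) (Fin n) F),
      kdiff υ (ksum A B) B = A) ∧
    (∀ (m n : ℕ) (A A' : Matrix (Fin m × Fin n) (Fin m × Fin n) F)
      (B B' : Matrix (Fin n) (Fin n) F),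
      kdiff υ (A + A') (B + B') = kdiff υ A B + kdiff υ A' B') ∧
    (∀ (m n : ℕ) (c : F) (A : Matrix (Fin m × Fin n) (Fin m × Fin n) F)
      (B : Matrix (Fin n) (Fin n) F),
      kdiff υ (c • A) (c • B) = c • kdiff υ A B) ∧
    (∀ (m p n : ℕ), 0 < n → ∀ (A : Matrix (Fin m) (Fin m) F)
      (B : Matrix (Fin n) (Fin n) F) (C : Matrix (Fin p × Fin n) (Fin p × Fin n) F),
      kdiff υ (Matrix.reindex (Equiv.prodAssoc (Fin m) (Fin p) (Fin n)).symm
          (Equiv.prodAssoc (Fin m) (Fin p) (Fin n)).symm (ksum A C)) B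
        = ksum A (kdiff υ C B)) := by
  refine ⟨fun m n hn A B => ?_, fun m n A A' B B' => ?_, fun m n c A B => ?_,
    fun m p n hn A B C => ?_⟩
  · rw [kdiff_eq_pairSnd, ksum, map_add, pairSnd_kronecker_one, pairSnd_one_kronecker, hυ n hn,
      one_smul, add_sub_cancel_right]
  · simp only [kdiff_eq_pairSnd, map_add, Matrix.mul_add, trace_add, add_smul]
    abel
  · simp only [kdiff_eq_pairSnd, map_smul, Matrix.mul_smul, trace_smul, smul_eq_mul, mul_smul,
      smul_sub]
  · rw [kdiff_eq_pairSnd, kdiff_eq_pairSnd, ksum, ksum, reindex_apply, submatrix_add,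
      Pi.add_apply, Pi.add_apply, ← reindex_apply, ← reindex_apply, map_add,
      pairSnd_kronecker_assoc, pairSnd_kronecker_assoc, pairSnd_one, hυ n hn, one_smul]
    simp only [sub_eq_add_neg, kronecker_add, ← neg_smul, kronecker_smul, one_kronecker_one,
      add_assoc]
end

section
/- Let a ∈ F² and b ∈ F^q be nonzero vectors, where q is an odd prime. Then a⊗b = b⊗a (Kronecker product of column vectors) if and only if there exists β ∈ F such that one of the following holds: (i) a = (1,0)ᵀ and b = β(1,0,…,0)ᵀ; (ii) a = (0,1)ᵀ and b = β(0,…,0,1)ᵀ; (iii) a = (1,1)ᵀ and b = β(1,1,…,1)ᵀ — where in each case a may additionally be scaled by any nonzero constant absorbed into β. -/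
open Matrix

theorem stmt13 {F : Type*} [Field F] {q : ℕ} (hq : Nat.Prime q) (hq2 : q ≠ 2)
    (a : Fin 2 → F) (b : Fin q → F) (ha : a ≠ 0) (hb : b ≠ 0) :
    -- `a ⊗ b = b ⊗ a` in `F^{2q}`, expressed entrywise via the standard
    -- flattening `(a ⊗ b)_{i*q + j} = a i * b j`, `(b ⊗ a)_{j*2 + i} = b j * a i`
    (∀ (i i' : Fin 2) (j j' : Fin q),
        (i : ℕ) * q + (j : ℕ) = (j' : ℕ) * 2 + (i' : ℕ) →
        a i * b j = b j' * a i') ↔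
    ∃ c β : F,
      (a = c • ![1, 0] ∧
        b = β • (fun j : Fin q => if (j : ℕ) = 0 then (1 : F) else 0)) ∨
      (a = c • ![0, 1] ∧
        b = β • (fun j : Fin q => if (j : ℕ) = q - 1 then (1 : F) else 0)) ∨
      (a = c • ![1, 1] ∧ b = β • (fun _ : Fin q => (1 : F))) := by
  have hq3 : 3 ≤ q := by
    have := hq.two_le
    rcases Nat.lt_or_ge q 3 with h | h
    · interval_cases q <;> simp_all
    · exact h
  have hqodd : q % 2 = 1 := Nat.odd_iff.mp (hq.odd_of_ne_two hq2)
  obtain ⟨Bn, Bdef⟩ : ∃ Bn : ℕ → F, ∀ n (h : n < q), Bn n = b ⟨n, h⟩ :=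
    ⟨fun n => if h : n < q then b ⟨n, h⟩ else 0, fun n h => dif_pos h⟩
  constructor
  · intro h
    have hA : ∀ m, 2*m < q → a 0 * Bn (2*m) = a 0 * Bn m := by
      intro m hm
      have := h 0 0 ⟨2*m, hm⟩ ⟨m, by omega⟩ (by simp; ring)
      rw [Bdef _ hm, Bdef _ (by omega : m < q), this]
      ring
    have hB : ∀ m, 2*m+1 < q → a 0 * Bn (2*m+1) = a 1 * Bn m := by
      intro m hm
      have := h 0 1 ⟨2*m+1, hm⟩ ⟨m, by omega⟩ (by simp; ring)
      rw [Bdef _ hm, Bdef _ (by omega : m < q), this]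
      ring
    have hC : ∀ m, q < 2*m → m < q → a 1 * Bn (2*m - q) = a 0 * Bn m := by
      intro m hm1 hm2
      have := h 1 0 ⟨2*m - q, by omega⟩ ⟨m, hm2⟩ (by simp; omega)
      rw [Bdef _ (by omega : 2*m - q < q), Bdef _ hm2, this]
      ring
    have hD : ∀ m, q ≤ 2*m+1 → m < q → a 1 * Bn (2*m+1 - q) = a 1 * Bn m := by
      intro m hm1 hm2
      have := h 1 1 ⟨2*m+1 - q, by omega⟩ ⟨m, hm2⟩ (by simp; omega)
      rw [Bdef _ (by omega : 2*m+1 - q < q), Bdef _ hm2, this]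
      ring
    by_cases ha0 : a 0 = 0
    · -- a = (0, a1), b supported at q-1
      have ha1 : a 1 ≠ 0 := by
        intro h1
        exact ha (funext fun i => by fin_cases i <;> simp [ha0, h1])
      have key : ∀ m, m < q - 1 → Bn m = 0 := by
        intro m
        induction m using Nat.strong_induction_on with
        | _ m ih =>
          intro hm
          by_cases hcase : 2*m+1 < q
          · have h2 := hB m hcase
            rw [ha0, zero_mul] at h2
            exact (mul_eq_zero.mp h2.symm).resolve_left ha1
          · rcases Nat.even_or_odd m with he | ho
            · obtain ⟨k, hk⟩ := he
              have h2 := hD m (by omega) (by omega)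
              have h3 : Bn (2*m+1-q) = Bn m := mul_left_cancel₀ ha1 h2
              rw [← h3]
              exact ih _ (by omega) (by omega)
            · obtain ⟨k, hk⟩ := ho
              have h2 := hC ((q+m)/2) (by omega) (by omega)
              rw [show 2*((q+m)/2) - q = m by omega, ha0, zero_mul] at h2
              exact (mul_eq_zero.mp h2).resolve_left ha1
      refine ⟨a 1, Bn (q-1), Or.inr (Or.inl ⟨?_, ?_⟩)⟩
      · funext i; fin_cases i <;> simp [ha0]
      · funext j
        have hbj : Bn (j : ℕ) = b j := Bdef _ j.isLt
        have hjlt := j.isLt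
        by_cases hje : (j : ℕ) = q - 1
        · simp only [Pi.smul_apply, smul_eq_mul, hje, if_true, eq_self_iff_true, mul_one]
          rw [← hbj, hje]
        · simp only [Pi.smul_apply, smul_eq_mul, if_neg hje, mul_zero]
          rw [← hbj]
          exact key _ (by omega)
    · by_cases ha1 : a 1 = 0
      · -- a = (a0, 0), b supported at 0
        have key2 : ∀ k m, m < q → q ≤ m + k → 0 < m → Bn m = 0 := by
          intro k
          induction k with
          | zero => intro m h1 h2 h3; omega
          | succ k ih =>
            intro m h1 h2 h3
            by_cases hc : q < 2*m
            · have h4 := hC m hc h1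
              rw [ha1, zero_mul] at h4
              exact (mul_eq_zero.mp h4.symm).resolve_left ha0
            · have h2m : 2*m < q := by omega
              have h4 : Bn (2*m) = Bn m := mul_left_cancel₀ ha0 (hA m h2m)
              rw [← h4]
              exact ih (2*m) h2m (by omega) (by omega)
        refine ⟨a 0, Bn 0, Or.inl ⟨?_, ?_⟩⟩
        · funext i; fin_cases i <;> simp [ha1]
        · funext j
          have hbj : Bn (j : ℕ) = b j := Bdef _ j.isLt
          have hjlt := j.isLt
          by_cases hje : (j : ℕ) = 0
          · simp only [Pi.smul_apply, smul_eq_mul, hje, if_true, eq_self_iff_true, mul_one]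
            rw [← hbj, hje]
          · simp only [Pi.smul_apply, smul_eq_mul, if_neg hje, mul_zero]
            rw [← hbj]
            exact key2 q _ j.isLt (by omega) (by omega)
      · -- a0, a1 both nonzero: a constant multiple of (1,1), b constant
        have hb0 : Bn 0 ≠ 0 := by
          intro h0
          have key3 : ∀ n, n < q → Bn n = 0 := by
            intro n
            induction n using Nat.strong_induction_on with
            | _ n ih =>
              intro hn
              by_cases hn0 : n = 0
              · rw [hn0]; exact h0
              · rcases Nat.even_or_odd n with he | ho
                · obtain ⟨m, hm⟩ := he
                  have e : Bn (2*m) = Bn m := mul_left_cancel₀ ha0 (hA m (by omega))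
                  rw [show n = 2*m by omega, e]
                  exact ih m (by omega) (by omega)
                · obtain ⟨m, hm⟩ := ho
                  have e := hB m (by omega)
                  rw [ih m (by omega) (by omega), mul_zero] at e
                  rw [show n = 2*m+1 by omega]
                  exact (mul_eq_zero.mp e).resolve_left ha0
          apply hb
          funext j
          have := key3 (j : ℕ) j.isLt
          rw [Bdef _ j.isLt] at this
          simpa using this
        have hb1 : a 0 * Bn 1 = a 1 * Bn 0 := by
          have := hB 0 (by omega)
          norm_num at this
          exact this
        have hBn1 : Bn 1 ≠ 0 := by
          intro hx
          rw [hx, mul_zero] at hb1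
          rcases mul_eq_zero.mp hb1.symm with h | h
          · exact ha1 h
          · exact hb0 h
        have h2 : Bn 2 = Bn 1 := by
          have h5 := hA 1 (by omega)
          rw [show 2*1 = 2 by norm_num] at h5
          exact mul_left_cancel₀ ha0 h5
        have hD2 : Bn 2 = Bn ((q+1)/2) := by
          have := hD ((q+1)/2) (by omega) (by omega)
          rw [show 2*((q+1)/2)+1 - q = 2 by omega] at this
          exact mul_left_cancel₀ ha1 this
        have hC2 : a 1 * Bn 1 = a 0 * Bn ((q+1)/2) := by
          have := hC ((q+1)/2) (by omega) (by omega)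
          rwa [show 2*((q+1)/2) - q = 1 by omega] at this
        have haa : a 1 = a 0 := by
          apply mul_right_cancel₀ hBn1
          rw [hC2, ← hD2, h2]
        have keyc : ∀ n, n < q → Bn n = Bn 0 := by
          intro n
          induction n using Nat.strong_induction_on with
          | _ n ih =>
            intro hn
            by_cases hn0 : n = 0
            · rw [hn0]
            · rcases Nat.even_or_odd n with he | ho
              · obtain ⟨m, hm⟩ := he
                have e : Bn (2*m) = Bn m := mul_left_cancel₀ ha0 (hA m (by omega))
                rw [show n = 2*m by omega, e]
                exact ih m (by omega) (by omega)
              · obtain ⟨m, hm⟩ := ho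
                have e := hB m (by omega)
                rw [haa] at e
                have e2 : Bn (2*m+1) = Bn m := mul_left_cancel₀ ha0 e
                rw [show n = 2*m+1 by omega, e2]
                exact ih m (by omega) (by omega)
        refine ⟨a 0, Bn 0, Or.inr (Or.inr ⟨?_, ?_⟩)⟩
        · funext i; fin_cases i <;> simp [haa]
        · funext j
          have hbj : Bn (j : ℕ) = b j := Bdef _ j.isLt
          simp only [Pi.smul_apply, smul_eq_mul, mul_one]
          rw [← hbj]
          exact keyc _ j.isLt
  · rintro ⟨c, β, (⟨haa, hbb⟩ | ⟨haa, hbb⟩ | ⟨haa, hbb⟩)⟩ <;>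
      subst haa <;> subst hbb <;> intro i i' j j' hij <;>
      have hjlt := j.isLt <;> have hjlt' := j'.isLt <;>
      fin_cases i <;> fin_cases i' <;>
      simp only [Fin.val_zero, Fin.val_one, Fin.isValue, Pi.smul_apply, smul_eq_mul,
        Fin.mk_zero, Fin.mk_one,
        Matrix.cons_val_zero, Matrix.cons_val_one, Matrix.head_cons,
        zero_mul, mul_zero, one_mul, mul_one, zero_add, add_zero] at hij ⊢
    all_goals try split_ifs
    all_goals try ring1
    all_goals (exfalso; omega)
end

section
/- Let A, B be 2×2 matrices over a field F with tr(A) = tr(B) = 1. Then A⊗B = B⊗A (Kronecker product) if and only if A = B. -/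
open Matrix Kronecker

theorem stmt15 {F : Type*} [Field F]
    (A B : Matrix (Fin 2) (Fin 2) F) (hA : trace A = 1) (hB : trace B = 1) :
    A ⊗ₖ B = B ⊗ₖ A ↔ A = B := by
  constructor
  · intro h
    simp [Matrix.trace, Fin.sum_univ_two, Matrix.diag] at hA hB
    ext i j
    have h0 : A i j * B 0 0 = B i j * A 0 0 := by
      have := congrFun (congrFun h (i, 0)) (j, 0)
      simpa [Matrix.kroneckerMap_apply] using this
    have h1 : A i j * B 1 1 = B i j * A 1 1 := by
      have := congrFun (congrFun h (i, 1)) (j, 1)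
      simpa [Matrix.kroneckerMap_apply] using this
    have : A i j * (B 0 0 + B 1 1) = B i j * (A 0 0 + A 1 1) := by ring_nf; linear_combination h0 + h1
    rw [hA, hB] at this
    simpa using this
  · rintro rfl; rfl
end
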